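/- GL₂(ℚ_p) is the disjoint union of the p + 1 subsets P·(0,1; 1,0)·K₁ and P·(1,0; [λ],1)·K₁ for λ ∈ 𝔽_p: every g ∈ GL₂(ℚ_p) lies in exactly one of these double cosets. (The decomposition used in the proof of Proposition 2.2 of the paper.) -/

import Mathlib

/-!
A double coset `P g K₁` only sees the bottom row `v` of `g`, up to the scalar by which `P`
multiplies it and up to the right action of `K₁`. The reduction of the point `[v 0 : v 1]` of
`ℙ¹(ℚ_p) = ℙ¹(ℤ_p)` to `ℙ¹(𝔽_p)` is blind to both, since it is locally constant and `K₁` moves `v`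
by less than `‖v‖`; it is `∞` on `(0,1; 1,0)` and `λ` on `(1,0; [λ],1)`, which separates the
`p + 1` double cosets. Conversely, `u ∈ K₁` can be chosen so that the representative times `u` has
bottom row proportional to `v`, and matrices with proportional bottom rows differ by an element
of `P` on the left.
-/

open Matrix

/-- membership in `K₁ = {g ∈ GL₂(ℤ_p) : g ≡ 1 (mod p)}`. -/
def InK1 (p : ℕ) [Fact p.Prime] (u : GL (Fin 2) ℚ_[p]) : Prop :=
  ∀ i j, ‖(u : Matrix (Fin 2) (Fin 2) ℚ_[p]) i j
            - (1 : Matrix (Fin 2) (Fin 2) ℚ_[p]) i j‖ ≤ (p : ℝ)⁻¹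

/-- the matrix `(0, 1; 1, 0)` as an element of `GL₂(ℚ_p)`. -/
noncomputable def WMat (p : ℕ) [Fact p.Prime] : GL (Fin 2) ℚ_[p] :=
  Matrix.GeneralLinearGroup.mkOfDetNeZero !![0, 1; 1, 0]
    (by simp [Matrix.det_fin_two_of])

/-- the matrix `(1, 0; c, 1)` as an element of `GL₂(ℚ_p)`. -/
noncomputable def NMat (p : ℕ) [Fact p.Prime] (c : ℤ_[p]) : GL (Fin 2) ℚ_[p] :=
  Matrix.GeneralLinearGroup.mkOfDetNeZero !![1, 0; (c : ℚ_[p]), 1]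
    (by simp [Matrix.det_fin_two_of])

theorem IsUltrametricDist.norm_eq_of_norm_sub_lt {E : Type*} [SeminormedAddGroup E]
    [IsUltrametricDist E] {x y : E} (h : ‖x - y‖ < ‖y‖) : ‖x‖ = ‖y‖ := by
  rw [← sub_add_cancel x y, norm_add_eq_max_of_norm_ne_norm h.ne, max_eq_right h.le]

theorem Matrix.mul_apply_one_eq_smul_of_apply_one_zero_eq_zero {R : Type*} [CommRing R]
    {b : Matrix (Fin 2) (Fin 2) R} (hb : b 1 0 = 0) (m : Matrix (Fin 2) (Fin 2) R) :
    (b * m) 1 = b 1 1 • m 1 := by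
  ext j
  simp [Matrix.mul_apply, hb]

namespace Matrix.GeneralLinearGroup

variable {R : Type*} [CommRing R]

theorem row_one_ne_zero [Nontrivial R] (g : GL (Fin 2) R) :
    (g : Matrix (Fin 2) (Fin 2) R) 1 ≠ 0 := by
  intro h
  have := congrFun (congrFun g.mul_inv 1) 1
  simp [Matrix.mul_apply, h] at this

theorem apply_one_one_ne_zero [Nontrivial R] {b : GL (Fin 2) R}
    (hb : (b : Matrix (Fin 2) (Fin 2) R) 1 0 = 0) : (b : Matrix (Fin 2) (Fin 2) R) 1 1 ≠ 0 :=
  fun h => row_one_ne_zero b (funext (Fin.forall_fin_two.2 ⟨hb, h⟩))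

theorem exists_eq_mul_of_row_one_eq_smul {g h : GL (Fin 2) R} {s : R}
    (hs : (g : Matrix (Fin 2) (Fin 2) R) 1 = s • (h : Matrix (Fin 2) (Fin 2) R) 1) :
    ∃ b : GL (Fin 2) R, (b : Matrix (Fin 2) (Fin 2) R) 1 0 = 0 ∧ g = b * h := by
  refine ⟨g * h⁻¹, ?_, by group⟩
  have hrow : ((g * h⁻¹ : GL (Fin 2) R) : Matrix (Fin 2) (Fin 2) R) 1
      = s • ((h * h⁻¹ : GL (Fin 2) R) : Matrix (Fin 2) (Fin 2) R) 1 := by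
    simp only [Units.val_mul, Matrix.mul_apply_eq_vecMul, hs, Matrix.smul_vecMul]
  simpa using congrFun hrow 0

end Matrix.GeneralLinearGroup

namespace PadicInt

variable {p : ℕ} [Fact p.Prime]

theorem toZMod_eq_toZMod_iff (x y : ℤ_[p]) : toZMod x = toZMod y ↔ ‖x - y‖ < 1 := by
  rw [← sub_eq_zero, ← map_sub, ← RingHom.mem_ker, ker_toZMod,
    IsLocalRing.mem_maximalIdeal, mem_nonunits]

end PadicInt

theorem Padic.norm_le_inv_of_norm_lt_one {p : ℕ} [Fact p.Prime] {x : ℚ_[p]} (h : ‖x‖ < 1) :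
    ‖x‖ ≤ (p : ℝ)⁻¹ := by
  simpa using (Padic.norm_lt_pow_iff_norm_le_pow_sub_one x 0).1 (by simpa using h)

section Reduction

variable {p : ℕ} [Fact p.Prime]

open PadicInt IsUltrametricDist

noncomputable def integralSlope (v : Fin 2 → ℚ_[p]) (h : ‖v 0‖ ≤ ‖v 1‖) : ℤ_[p] :=
  ⟨v 0 / v 1, by rw [norm_div]; exact div_le_one_of_le₀ h (norm_nonneg _)⟩

@[simp]
theorem coe_integralSlope (v : Fin 2 → ℚ_[p]) (h : ‖v 0‖ ≤ ‖v 1‖) :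
    (integralSlope v h : ℚ_[p]) = v 0 / v 1 :=
  rfl

/-- The point `[v 0 : v 1]` of `ℙ¹(ℚ_p) = ℙ¹(ℤ_p)` reduced to `ℙ¹(𝔽_p) = 𝔽_p ∪ {∞}`,
with `none` standing for `∞ = [1 : 0]`. -/
noncomputable def reductionP1 (v : Fin 2 → ℚ_[p]) : Option (ZMod p) :=
  if h : ‖v 0‖ ≤ ‖v 1‖ then some (toZMod (integralSlope v h)) else none

theorem reductionP1_eq_none_iff {v : Fin 2 → ℚ_[p]} : reductionP1 v = none ↔ ‖v 1‖ < ‖v 0‖ := by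
  unfold reductionP1
  split_ifs with h <;> simpa using h

theorem reductionP1_eq_some {v : Fin 2 → ℚ_[p]} (τ : ℤ_[p]) (h : ‖v 0 - τ * v 1‖ < ‖v 1‖) :
    reductionP1 v = some (toZMod τ) := by
  have hv1 : v 1 ≠ 0 := norm_pos_iff.1 ((norm_nonneg _).trans_lt h)
  have hle : ‖v 0‖ ≤ ‖v 1‖ := by
    calc ‖v 0‖ = ‖(v 0 - τ * v 1) + τ * v 1‖ := by rw [sub_add_cancel]
      _ ≤ max ‖v 0 - τ * v 1‖ ‖(τ : ℚ_[p]) * v 1‖ := norm_add_le_max _ _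
      _ ≤ ‖v 1‖ := max_le h.le (by rw [norm_mul]; exact mul_le_of_le_one_left (norm_nonneg _) τ.2)
  rw [reductionP1, dif_pos hle, Option.some_inj, toZMod_eq_toZMod_iff, PadicInt.norm_def]
  push_cast
  rwa [coe_integralSlope, div_sub' hv1, norm_div, div_lt_one (norm_pos_iff.2 hv1), mul_comm]

theorem reductionP1_smul {s : ℚ_[p]} (hs : s ≠ 0) (v : Fin 2 → ℚ_[p]) :
    reductionP1 (s • v) = reductionP1 v := by
  simp only [reductionP1, integralSlope, Pi.smul_apply, smul_eq_mul, norm_mul,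
    mul_le_mul_iff_right₀ (norm_pos_iff.2 hs), mul_div_mul_left _ _ hs]

theorem reductionP1_eq_of_norm_sub_lt {v w : Fin 2 → ℚ_[p]} (h : ‖w - v‖ < ‖v‖) :
    reductionP1 w = reductionP1 v := by
  have hwv : ∀ i, ‖w i - v i‖ < ‖v‖ := fun i => (norm_le_pi_norm (w - v) i).trans_lt h
  have hw : ∀ i, ‖v i‖ = ‖v‖ → ‖w i‖ = ‖v‖ := fun i hi =>
    (norm_eq_of_norm_sub_lt ((hwv i).trans_eq hi.symm)).trans hi
  have hlt : ∀ i, ‖v i‖ < ‖v‖ → ‖w i‖ < ‖v‖ := fun i hi => by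
    simpa using (norm_add_le_max (w i - v i) (v i)).trans_lt (max_lt (hwv i) hi)
  by_cases hv : ‖v 0‖ ≤ ‖v 1‖
  · have hv1 : ‖v 1‖ = ‖v‖ :=
      le_antisymm (norm_le_pi_norm v 1) ((pi_norm_le_iff_of_nonneg (norm_nonneg _)).2
        (Fin.forall_fin_two.2 ⟨hv, le_rfl⟩))
    have hv0 : 0 < ‖v 1‖ := hv1 ▸ (norm_nonneg _).trans_lt h
    set τ := integralSlope v hv
    have hτ : (τ : ℚ_[p]) * v 1 = v 0 := div_mul_cancel₀ _ (norm_pos_iff.1 hv0)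
    have hwτ : w 0 - τ * w 1 = (w 0 - v 0) + τ * (v 1 - w 1) := by
      rw [mul_sub, hτ]; ring
    rw [reductionP1_eq_some (v := v) τ (by rwa [hτ, sub_self, norm_zero]),
      reductionP1_eq_some (v := w) τ]
    rw [hwτ, hw 1 hv1]
    refine (norm_add_le_max _ _).trans_lt (max_lt (hwv 0) ?_)
    rw [norm_mul, norm_sub_rev]
    exact (mul_le_of_le_one_left (norm_nonneg _) τ.2).trans_lt (hwv 1)
  · rw [not_le] at hv
    have hv0 : ‖v 0‖ = ‖v‖ :=
      le_antisymm (norm_le_pi_norm v 0) ((pi_norm_le_iff_of_nonneg (norm_nonneg _)).2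
        (Fin.forall_fin_two.2 ⟨le_rfl, hv.le⟩))
    rw [reductionP1_eq_none_iff.2 hv, reductionP1_eq_none_iff, hw 0 hv0]
    exact hlt 1 (hv0 ▸ hv)

theorem InK1.norm_vecMul_sub_le {u : GL (Fin 2) ℚ_[p]} (hu : InK1 p u) (v : Fin 2 → ℚ_[p]) :
    ‖v ᵥ* (u : Matrix (Fin 2) (Fin 2) ℚ_[p]) - v‖ ≤ (p : ℝ)⁻¹ * ‖v‖ := by
  have hC : 0 ≤ (p : ℝ)⁻¹ * ‖v‖ := by positivity
  nth_rw 2 [← vecMul_one v]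
  rw [← vecMul_sub, pi_norm_le_iff_of_nonneg hC]
  intro j
  rw [vecMul, dotProduct]
  refine norm_sum_le_of_forall_le_of_nonneg hC fun i _ => ?_
  rw [norm_mul, mul_comm]
  exact mul_le_mul (hu i j) (norm_le_pi_norm v i) (norm_nonneg _) (by positivity)

theorem reductionP1_vecMul_of_inK1 {u : GL (Fin 2) ℚ_[p]} (hu : InK1 p u) {v : Fin 2 → ℚ_[p]}
    (hv : v ≠ 0) : reductionP1 (v ᵥ* (u : Matrix (Fin 2) (Fin 2) ℚ_[p])) = reductionP1 v := by
  have hp : (p : ℝ)⁻¹ < 1 := inv_lt_one_of_one_lt₀ (by exact_mod_cast (Fact.out : p.Prime).one_lt)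
  exact reductionP1_eq_of_norm_sub_lt
    ((hu.norm_vecMul_sub_le v).trans_lt (mul_lt_of_lt_one_left (norm_pos_iff.2 hv) hp))

end Reduction

section Decomposition

variable {p : ℕ} [Fact p.Prime]

open PadicInt Matrix.GeneralLinearGroup

noncomputable def cosetRep (T : ZMod p → ℤ_[p]) (i : Option (ZMod p)) : GL (Fin 2) ℚ_[p] :=
  Option.elim i (WMat p) (fun l => NMat p (T l))

theorem reductionP1_cosetRep {T : ZMod p → ℤ_[p]} (hT : ∀ l, toZMod (T l) = l)
    (i : Option (ZMod p)) : reductionP1 ((cosetRep T i : Matrix (Fin 2) (Fin 2) ℚ_[p]) 1) = i := by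
  cases i with
  | none => exact reductionP1_eq_none_iff.2 (by simp [cosetRep, WMat])
  | some l => simpa [hT] using reductionP1_eq_some (T l) (by simp [cosetRep, NMat])

theorem reductionP1_row_one_mul_mul {b u : GL (Fin 2) ℚ_[p]}
    (hb : (b : Matrix (Fin 2) (Fin 2) ℚ_[p]) 1 0 = 0) (hu : InK1 p u) (m : GL (Fin 2) ℚ_[p]) :
    reductionP1 (((b * m * u : GL (Fin 2) ℚ_[p]) : Matrix (Fin 2) (Fin 2) ℚ_[p]) 1)
      = reductionP1 ((m : Matrix (Fin 2) (Fin 2) ℚ_[p]) 1) := by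
  rw [Units.val_mul, Units.val_mul, Matrix.mul_assoc,
    mul_apply_one_eq_smul_of_apply_one_zero_eq_zero hb, reductionP1_smul (apply_one_one_ne_zero hb),
    mul_apply_eq_vecMul,
    reductionP1_vecMul_of_inK1 hu (row_one_ne_zero m)]

theorem inK1_NMat {c : ℤ_[p]} (hc : ‖c‖ < 1) : InK1 p (NMat p c) := by
  have : ‖c‖ ≤ (p : ℝ)⁻¹ := Padic.norm_le_inv_of_norm_lt_one hc
  intro i j
  fin_cases i <;> fin_cases j <;> simp [NMat, this]

theorem inK1_upperRightHom {t : ℚ_[p]} (ht : ‖t‖ < 1) : InK1 p (upperRightHom t) := by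
  have := Padic.norm_le_inv_of_norm_lt_one ht
  intro i j
  fin_cases i <;> fin_cases j <;> simp [this]

theorem exists_eq_mul_cosetRep_mul {T : ZMod p → ℤ_[p]} (hT : ∀ l, toZMod (T l) = l)
    (g : GL (Fin 2) ℚ_[p]) : ∃ b u : GL (Fin 2) ℚ_[p], (b : Matrix (Fin 2) (Fin 2) ℚ_[p]) 1 0 = 0 ∧
      InK1 p u ∧ g = b * cosetRep T (reductionP1 ((g : Matrix (Fin 2) (Fin 2) ℚ_[p]) 1)) * u := by
  set v := (g : Matrix (Fin 2) (Fin 2) ℚ_[p]) 1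
  suffices ∃ u, InK1 p u ∧ ∃ s, v = s • ((cosetRep T (reductionP1 v) * u : GL (Fin 2) ℚ_[p]) :
      Matrix (Fin 2) (Fin 2) ℚ_[p]) 1 by
    obtain ⟨u, hu, s, hs⟩ := this
    obtain ⟨b, hb, hgb⟩ := exists_eq_mul_of_row_one_eq_smul hs
    exact ⟨b, u, hb, hu, by rw [hgb, mul_assoc]⟩
  have hv : v ≠ 0 := row_one_ne_zero g
  by_cases h : ‖v 0‖ ≤ ‖v 1‖
  · have hv1 : v 1 ≠ 0 := fun h1 =>
      hv <| funext <| Fin.forall_fin_two.2 ⟨norm_le_zero_iff.1 (by simpa [h1] using h), h1⟩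
    set c := integralSlope v h
    refine ⟨NMat p (c - T (toZMod c)), inK1_NMat ?_, v 1, ?_⟩
    · rw [← sub_zero (c - _), ← toZMod_eq_toZMod_iff, map_sub, hT, sub_self, map_zero]
    · rw [reductionP1, dif_pos h]
      ext j
      fin_cases j <;> simp [cosetRep, NMat, c, mul_div_cancel₀ _ hv1]
  · rw [not_le] at h
    have hv0 : v 0 ≠ 0 := norm_pos_iff.1 ((norm_nonneg _).trans_lt h)
    refine ⟨upperRightHom (v 1 / v 0), inK1_upperRightHom ?_, v 0, ?_⟩
    · rwa [norm_div, div_lt_one (norm_pos_iff.2 hv0)]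
    · rw [reductionP1_eq_none_iff.2 h]
      ext j
      fin_cases j <;> simp [cosetRep, WMat, mul_div_cancel₀ _ hv0]

end Decomposition

theorem statement_4 (p : ℕ) [Fact p.Prime] (T : ZMod p → ℤ_[p])
    (hT : ∀ l : ZMod p, T l ^ p = T l ∧ PadicInt.toZMod (T l) = l) :
    ∀ g : GL (Fin 2) ℚ_[p], ∃! i : Option (ZMod p),
      ∃ b u : GL (Fin 2) ℚ_[p],
        (b : Matrix (Fin 2) (Fin 2) ℚ_[p]) 1 0 = 0 ∧ InK1 p u ∧
        g = b * (Option.elim i (WMat p) (fun l => NMat p (T l))) * u := by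
  have hT' : ∀ l, PadicInt.toZMod (T l) = l := fun l => (hT l).2
  intro g
  refine ⟨_, exists_eq_mul_cosetRep_mul hT' g, ?_⟩
  rintro i ⟨b, u, hb, hu, rfl⟩
  exact ((reductionP1_row_one_mul_mul hb hu _).trans (reductionP1_cosetRep hT' i)).symm
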